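/- For every integer i, define nⁱ = (1, i, i² − i + 1) ∈ ℤ³. Then: (1) det[nⁱ n^{i+1} n^{i+2}] = 2 for every i; and (2) the third component of the cross product nⁱ × n^j equals j − i, so (nⁱ × n^j)(3) > 0 whenever i < j. -/

import Mathlib

/-- Determinant of the 3×3 integer matrix with columns `a`, `b`, `c`. -/
def det3 (a b c : Fin 3 → ℤ) : ℤ := Matrix.det (Matrix.transpose (Matrix.of ![a, b, c]))

/-- Third component of the cross product of two vectors in `ℤ³`. -/
def cross3 (v w : Fin 3 → ℤ) : ℤ := v 0 * w 1 - v 1 * w 0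

/-- The vector `nⁱ = (1, i, i² − i + 1)`. -/
def nvec (i : ℤ) : Fin 3 → ℤ := ![1, i, i ^ 2 - i + 1]

/- The third coordinate of `nvec i` is `i²` plus a combination of the first two, so this is the
Vandermonde determinant of `i, j, k`. -/
theorem det3_nvec (i j k : ℤ) :
    det3 (nvec i) (nvec j) (nvec k) = (j - i) * (k - i) * (k - j) := by
  rw [det3, Matrix.det_transpose, Matrix.det_fin_three]
  simp [nvec]
  ring

theorem cross3_nvec (i j : ℤ) : cross3 (nvec i) (nvec j) = j - i := by
  simp [cross3, nvec]

theorem cross3_nvec_pos {i j : ℤ} (hij : i < j) : 0 < cross3 (nvec i) (nvec j) := by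
  rw [cross3_nvec]
  exact sub_pos.mpr hij

theorem explicit_good_cone_normals :
    (∀ i : ℤ, det3 (nvec i) (nvec (i + 1)) (nvec (i + 2)) = 2) ∧
    (∀ i j : ℤ, cross3 (nvec i) (nvec j) = j - i) ∧
    (∀ i j : ℤ, i < j → 0 < cross3 (nvec i) (nvec j)) := by
  refine ⟨fun i => ?_, cross3_nvec, fun _ _ => cross3_nvec_pos⟩
  rw [det3_nvec]
  ring
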